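/- Let C be a binary linear code with odd minimum distance d, with coset leaders chosen as ⪯-minimum elements. If C(d, (d+1)/2) > |A_d(C)| + |A_{d+1}(C)| − 1, then every codeword of C of weight d or d+1 is contained in every trial set for C, where A_i(C) is the set of codewords of C of weight i and C(m,r) denotes the binomial coefficient. -/

import Mathlib

/-- Support of a binary vector: the set of nonzero coordinates. -/
def supp {n : ℕ} (x : Fin n → ZMod 2) : Finset (Fin n) :=
  Finset.univ.filter (fun i => x i ≠ 0)

/-- Hamming weight. -/
def wt {n : ℕ} (x : Fin n → ZMod 2) : ℕ := (supp x).card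

/-- Numerical value v(x) = Σ_{i=1}^n x_i 2^(n-i) (0-based: exponent n-1-i). -/
def nval {n : ℕ} (x : Fin n → ZMod 2) : ℕ :=
  ∑ i : Fin n, (x i).val * 2 ^ (n - 1 - (i : ℕ))

/-- The total order ⪯ : first by weight, ties broken by numerical value. -/
def ple {n : ℕ} (x y : Fin n → ZMod 2) : Prop :=
  wt x < wt y ∨ (wt x = wt y ∧ nval x ≤ nval y)

/-- The strict version ≺ of ⪯. -/
def plt {n : ℕ} (x y : Fin n → ZMod 2) : Prop := ple x y ∧ x ≠ y

/-- Covering order: x ⊆ y iff S(x) ⊆ S(y). -/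
def covers {n : ℕ} (x y : Fin n → ZMod 2) : Prop := supp x ⊆ supp y

/-- v is the coset leader of its coset of C, i.e. the ⪯-minimum element
(u ranges over the coset of v: u + v ∈ C). -/
def IsCosetLeader {n : ℕ} (C : Submodule (ZMod 2) (Fin n → ZMod 2))
    (v : Fin n → ZMod 2) : Prop :=
  ∀ u, u + v ∈ C → ple v u

/-- E⁰(C): the set of correctable errors (coset leaders). -/
def E0 {n : ℕ} (C : Submodule (ZMod 2) (Fin n → ZMod 2)) : Set (Fin n → ZMod 2) :=
  {v | IsCosetLeader C v}

/-- E¹(C): the set of uncorrectable errors. -/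
def E1 {n : ℕ} (C : Submodule (ZMod 2) (Fin n → ZMod 2)) : Set (Fin n → ZMod 2) :=
  {v | ¬ IsCosetLeader C v}

/-- M¹(C): the ⊆-minimal elements of E¹(C). -/
def M1 {n : ℕ} (C : Submodule (ZMod 2) (Fin n → ZMod 2)) : Set (Fin n → ZMod 2) :=
  {v ∈ E1 C | ∀ u ∈ E1 C, covers u v → u = v}

/-- v is a larger half of c: v is ⊆-minimal among vectors u with u + c ≺ u. -/
def IsLH {n : ℕ} (c v : Fin n → ZMod 2) : Prop :=
  plt (v + c) v ∧ ∀ u, plt (u + c) u → covers u v → u = v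

/-- LH(c): the set of larger halves of c. -/
def LH {n : ℕ} (c : Fin n → ZMod 2) : Set (Fin n → ZMod 2) := {v | IsLH c v}

/-- LH(U) = ∪_{c ∈ U} LH(c). -/
def LHset {n : ℕ} (U : Set (Fin n → ZMod 2)) : Set (Fin n → ZMod 2) :=
  ⋃ c ∈ U, LH c

/-- LH⁻(c): larger halves of c of weight w(c)/2 (for even-weight c). -/
def LHm {n : ℕ} (c : Fin n → ZMod 2) : Set (Fin n → ZMod 2) :=
  {v ∈ LH c | 2 * wt v = wt c}

/-- A_i(U): elements of U of weight i. -/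
def Aw {n : ℕ} (U : Set (Fin n → ZMod 2)) (i : ℕ) : Set (Fin n → ZMod 2) :=
  {v ∈ U | wt v = i}

/-- C has minimum distance d. -/
def HasMinDist {n : ℕ} (C : Submodule (ZMod 2) (Fin n → ZMod 2)) (d : ℕ) : Prop :=
  (∃ c ∈ C, c ≠ 0 ∧ wt c = d) ∧ ∀ c ∈ C, c ≠ 0 → d ≤ wt c

/-- T is a trial set for C. -/
def IsTrialSet {n : ℕ} (C : Submodule (ZMod 2) (Fin n → ZMod 2))
    (T : Set (Fin n → ZMod 2)) : Prop :=
  T ⊆ (C : Set (Fin n → ZMod 2)) \ {0} ∧ M1 C ⊆ LHset T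

/-- l(x) = min S(x), the leftmost nonzero coordinate (⊤ if x = 0). -/
def lm {n : ℕ} (x : Fin n → ZMod 2) : WithTop (Fin n) := (supp x).min

/-- The coordinatewise "and" of two vectors: support is S(x) ∩ S(y). -/
def vand {n : ℕ} (x y : Fin n → ZMod 2) : Fin n → ZMod 2 := fun i => x i * y i


section Helpers
variable {n : ℕ}

lemma zc (a : ZMod 2) : a = 0 ∨ a = 1 := by
  fin_cases a
  · exact Or.inl rfl
  · exact Or.inr rfl

lemma mem_supp {n : ℕ} {x : Fin n → ZMod 2} {i : Fin n} : i ∈ supp x ↔ x i ≠ 0 := by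
  simp [supp]

lemma eq_of_supp_eq {n : ℕ} {x y : Fin n → ZMod 2} (h : supp x = supp y) : x = y := by
  funext i
  have := Finset.ext_iff.mp h i
  simp only [mem_supp] at this
  rcases zc (x i) with h1 | h1 <;> rcases zc (y i) with h2 | h2 <;>
    simp [h1, h2] at this ⊢

lemma add_self' {n : ℕ} (x : Fin n → ZMod 2) : x + x = 0 := by
  funext i; simp only [Pi.add_apply, Pi.zero_apply]
  rcases zc (x i) with h | h <;> simp [h] <;> decide

lemma supp_add {n : ℕ} (x y : Fin n → ZMod 2) :
    supp (x + y) = (supp x ∪ supp y) \ (supp x ∩ supp y) := by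
  ext i
  simp only [mem_supp, Finset.mem_sdiff, Finset.mem_union, Finset.mem_inter, Pi.add_apply]
  rcases zc (x i) with h1 | h1 <;> rcases zc (y i) with h2 | h2 <;> simp [h1, h2] <;> decide

lemma supp_zero {n : ℕ} : supp (0 : Fin n → ZMod 2) = ∅ := by
  ext i; simp [mem_supp]

lemma ne_zero_of_mem_supp {n : ℕ} {x : Fin n → ZMod 2} (h : (supp x).Nonempty) : x ≠ 0 := by
  intro h0; rw [h0, supp_zero] at h; simp at h

lemma supp_nonempty {n : ℕ} {x : Fin n → ZMod 2} (h : x ≠ 0) : (supp x).Nonempty := by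
  by_contra hne
  exact h (eq_of_supp_eq (by rw [Finset.not_nonempty_iff_eq_empty.mp hne, supp_zero]))

lemma supp_add_subset {n : ℕ} {x y : Fin n → ZMod 2} (h : supp x ⊆ supp y) :
    supp (x + y) = supp y \ supp x := by
  rw [supp_add]
  rw [Finset.union_eq_right.mpr h, Finset.inter_eq_left.mpr h]

lemma wt_add_subset {n : ℕ} {x y : Fin n → ZMod 2} (h : supp x ⊆ supp y) :
    wt (x + y) = wt y - wt x := by
  rw [wt, supp_add_subset h, Finset.card_sdiff_of_subset h]; rfl

lemma wt_triangle {n : ℕ} (x y : Fin n → ZMod 2) : wt x - wt y ≤ wt (x + y) := by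
  have h1 : supp x \ supp y ⊆ supp (x + y) := by
    rw [supp_add]
    intro i hi
    simp only [Finset.mem_sdiff, Finset.mem_union, Finset.mem_inter] at hi ⊢
    tauto
  calc wt x - wt y ≤ (supp x \ supp y).card := Finset.le_card_sdiff _ _
    _ ≤ _ := Finset.card_le_card h1

lemma val_one_of_ne {a : ZMod 2} (h : a ≠ 0) : a.val = 1 := by
  rcases zc a with h1 | h1
  · exact absurd h1 h
  · rw [h1]; rfl

lemma nval_eq_sum_supp {n : ℕ} (x : Fin n → ZMod 2) :
    nval x = ∑ j ∈ supp x, 2 ^ (n - 1 - (j : ℕ)) := by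
  rw [nval, ← Finset.sum_subset (Finset.subset_univ (supp x))]
  · exact Finset.sum_congr rfl fun j hj => by rw [val_one_of_ne (mem_supp.mp hj), one_mul]
  · intro j _ hj
    have : x j = 0 := by by_contra h; exact hj (mem_supp.mpr h)
    simp [this]

lemma sum_range_two_pow (m : ℕ) : ∑ k ∈ Finset.range m, 2 ^ k = 2 ^ m - 1 := by
  induction m with
  | zero => simp
  | succ m ih =>
    rw [Finset.sum_range_succ, ih, pow_succ]
    have := Nat.one_le_two_pow (n := m)
    omega

lemma nval_lt {n : ℕ} {x y : Fin n → ZMod 2} {i : Fin n} (hx : i ∈ supp x)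
    (hy : ∀ j ∈ supp y, (i : ℕ) < (j : ℕ)) : nval y < nval x := by
  have hin : (i : ℕ) < n := i.isLt
  have h1 : 2 ^ (n - 1 - (i : ℕ)) ≤ nval x := by
    rw [nval_eq_sum_supp]
    exact Finset.single_le_sum (f := fun j : Fin n => 2 ^ (n - 1 - (j : ℕ))) (fun j _ => Nat.zero_le _) hx
  have h2 : nval y < 2 ^ (n - 1 - (i : ℕ)) := by
    rw [nval_eq_sum_supp]
    set m := n - 1 - (i : ℕ) with hm
    have hinj : Set.InjOn (fun j : Fin n => n - 1 - (j : ℕ)) (supp y) := by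
      intro a _ b _ hab
      simp only at hab
      exact Fin.ext (by omega)
    rw [← Finset.sum_image (f := fun k => 2 ^ k) (g := fun j : Fin n => n - 1 - (j : ℕ))
      (fun a ha b hb hab => hinj ha hb hab)]
    have hsub : (supp y).image (fun j : Fin n => n - 1 - (j : ℕ)) ⊆ Finset.range m := by
      intro k hk
      simp only [Finset.mem_image] at hk
      obtain ⟨j, hj, rfl⟩ := hk
      have := hy j hj
      have := j.isLt
      simp only [Finset.mem_range]
      omega
    calc ∑ k ∈ (supp y).image (fun j : Fin n => n - 1 - (j : ℕ)), 2 ^ k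
        ≤ ∑ k ∈ Finset.range m, 2 ^ k :=
          Finset.sum_le_sum_of_subset hsub
      _ = 2 ^ m - 1 := sum_range_two_pow m
      _ < 2 ^ m := by have := Nat.one_le_two_pow (n := m); omega
  omega


lemma supp_vand (x y : Fin n → ZMod 2) : supp (vand x y) = supp x ∩ supp y := by
  ext i
  simp only [mem_supp, Finset.mem_inter, vand]
  rcases zc (x i) with h1 | h1 <;> rcases zc (y i) with h2 | h2 <;> simp [h1, h2]

lemma ne_zero_of_plt_add {c v : Fin n → ZMod 2} (h : plt (v + c) v) : c ≠ 0 := by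
  rintro rfl; exact h.2 (by simp)

/-- Larger halves are covered by the codeword. -/
lemma LH_subset {c v : Fin n → ZMod 2} (h : IsLH c v) : supp v ⊆ supp c := by
  obtain ⟨h1, h2⟩ := h
  have hc0 : c ≠ 0 := ne_zero_of_plt_add h1
  set u := vand v c with hu
  have hsu : supp u = supp v ∩ supp c := supp_vand v c
  have hsuc : supp (u + c) = supp c \ supp v := by
    rw [supp_add, hsu]
    ext i
    simp only [Finset.mem_sdiff, Finset.mem_union, Finset.mem_inter]
    tauto
  have hsvc : supp (v + c) = (supp v \ supp c) ∪ (supp c \ supp v) := by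
    rw [supp_add]
    ext i
    simp only [Finset.mem_sdiff, Finset.mem_union, Finset.mem_inter]
    tauto
  have hsv : supp v = (supp v \ supp c) ∪ (supp v ∩ supp c) := by
    ext i
    simp only [Finset.mem_sdiff, Finset.mem_union, Finset.mem_inter]
    tauto
  have hd1 : Disjoint (supp v \ supp c) (supp c \ supp v) := by
    rw [Finset.disjoint_left]; intro i hi hi'
    simp only [Finset.mem_sdiff] at hi hi'; tauto
  have hd2 : Disjoint (supp v \ supp c) (supp v ∩ supp c) := by
    rw [Finset.disjoint_left]; intro i hi hi'
    simp only [Finset.mem_sdiff, Finset.mem_inter] at hi hi'; tauto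
  -- weights
  have hw1 : wt (v + c) = (supp v \ supp c).card + (supp c \ supp v).card := by
    rw [wt, hsvc, Finset.card_union_of_disjoint hd1]
  have hw2 : wt v = (supp v \ supp c).card + (supp v ∩ supp c).card := by
    rw [wt]; conv_lhs => rw [hsv]
    rw [Finset.card_union_of_disjoint hd2]
  have hw3 : wt (u + c) = (supp c \ supp v).card := by rw [wt, hsuc]
  have hw4 : wt u = (supp v ∩ supp c).card := by rw [wt, hsu]
  -- nvals
  have hn1 : nval (v + c) = nval (u + c) +
      ∑ j ∈ supp v \ supp c, 2 ^ (n - 1 - (j : ℕ)) := by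
    rw [nval_eq_sum_supp, nval_eq_sum_supp, hsvc, hsuc,
      Finset.sum_union hd1]
    ring
  have hn2 : nval v = nval u + ∑ j ∈ supp v \ supp c, 2 ^ (n - 1 - (j : ℕ)) := by
    rw [nval_eq_sum_supp, nval_eq_sum_supp, hsu]
    conv_lhs => rw [hsv]
    rw [Finset.sum_union hd2]
    ring
  have huc : u + c ≠ u := by
    intro h
    apply hc0
    have := congrArg (fun z => z + u) h
    simpa [add_comm, add_assoc, add_left_comm, add_self'] using
      (by calc c = u + c + u := by rw [add_comm u c, add_assoc, add_self', add_zero]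
            _ = u + u := by rw [h]
            _ = 0 := add_self' u)
  have hplt : plt (u + c) u := by
    refine ⟨?_, huc⟩
    rcases h1.1 with hlt | ⟨heq, hle⟩
    · left; omega
    · right
      constructor
      · omega
      · omega
  have := h2 u hplt (by rw [covers, hsu]; exact Finset.inter_subset_left)
  rw [← this, hsu]
  exact Finset.inter_subset_right

lemma LH_wt {c v : Fin n → ZMod 2} (h : IsLH c v) : wt c ≤ 2 * wt v := by
  have hsub := LH_subset h
  have hle : wt v ≤ wt c := Finset.card_le_card hsub
  have hw := wt_add_subset hsub
  rcases h.1.1 with hlt | ⟨heq, _⟩ <;> omega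

lemma small_leader {C : Submodule (ZMod 2) (Fin n → ZMod 2)} {d : ℕ}
    (hd : HasMinDist C d) {u : Fin n → ZMod 2} (h : 2 * wt u < d) :
    IsCosetLeader C u := by
  intro z hz
  by_cases h0 : z + u = 0
  · have : z = u := by
      have := congrArg (fun w => w + u) h0
      simpa [add_assoc, add_self'] using this
    rw [this]; right; exact ⟨rfl, le_refl _⟩
  · have hdle : d ≤ wt (z + u) := hd.2 _ hz h0
    have : wt (z + u) - wt u ≤ wt (z + u + u) := wt_triangle _ _
    rw [add_assoc, add_self', add_zero] at this
    left; omega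

lemma mem_M1_small {C : Submodule (ZMod 2) (Fin n → ZMod 2)} {d : ℕ}
    (hd : HasMinDist C d) {c v : Fin n → ZMod 2} (hcC : c ∈ C)
    (hsub : supp v ⊆ supp c) (h2 : 2 * wt v ≤ d + 1)
    (hnp : ¬ ple v (v + c)) : v ∈ M1 C := by
  constructor
  · intro hL
    exact hnp (hL (v + c) (by
      have : v + c + v = c := by
        rw [add_comm v c, add_assoc, add_self', add_zero]
      rw [this]; exact hcC))
  · intro u hu hcov
    by_contra hne
    apply hu
    apply small_leader hd
    have hss : supp u ⊂ supp v := by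
      refine ⟨hcov, fun hle => hne (eq_of_supp_eq (Finset.Subset.antisymm hcov hle))⟩
    have : wt u < wt v := Finset.card_lt_card hss
    omega

end Helpers


section Main
variable {n : ℕ}

lemma mem_M1_d {C : Submodule (ZMod 2) (Fin n → ZMod 2)} {d m : ℕ}
    (hd : HasMinDist C d) (hdm : d = 2 * m + 1) {c v : Fin n → ZMod 2}
    (hcC : c ∈ C) (hwc : wt c = d) (hsub : supp v ⊆ supp c) (hwv : wt v = m + 1) :
    v ∈ M1 C := by
  apply mem_M1_small hd hcC hsub (by omega)
  have hvc : wt (v + c) = wt c - wt v := wt_add_subset hsub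
  intro hple
  rcases hple with hlt | ⟨heq, _⟩ <;> omega

lemma mem_M1_d1 {C : Submodule (ZMod 2) (Fin n → ZMod 2)} {d m : ℕ}
    (hd : HasMinDist C d) (hdm : d = 2 * m + 1) {c v : Fin n → ZMod 2}
    (hcC : c ∈ C) (hwc : wt c = d + 1) (hsub : supp v ⊆ supp c) (hwv : wt v = m + 1)
    {i₀ : Fin n} (hi₀v : i₀ ∈ supp v) (hmin : ∀ j ∈ supp c, i₀ ≤ j) :
    v ∈ M1 C := by
  apply mem_M1_small hd hcC hsub (by omega)
  have hvc : wt (v + c) = wt c - wt v := wt_add_subset hsub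
  have hsvc : supp (v + c) = supp c \ supp v := supp_add_subset hsub
  have hnv : nval (v + c) < nval v := by
    apply nval_lt hi₀v
    intro j hj
    rw [hsvc, Finset.mem_sdiff] at hj
    have h1 : i₀ ≤ j := hmin j hj.1
    have h2 : i₀ ≠ j := fun h => hj.2 (h ▸ hi₀v)
    have := Fin.lt_iff_val_lt_val.mp (lt_of_le_of_ne h1 h2)
    exact this
  intro hple
  rcases hple with hlt | ⟨heq, hle⟩ <;> omega

def ind {n : ℕ} (s : Finset (Fin n)) : Fin n → ZMod 2 := fun i => if i ∈ s then 1 else 0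

lemma supp_ind (s : Finset (Fin n)) : supp (ind s) = s := by
  ext i
  simp only [mem_supp, ind]
  by_cases h : i ∈ s <;> simp [h]

lemma ind_injective : Function.Injective (ind (n := n)) := by
  intro s t h
  rw [← supp_ind s, ← supp_ind t, h]

lemma core {C : Submodule (ZMod 2) (Fin n → ZMod 2)} {d m : ℕ}
    (hd : HasMinDist C d) (hdm : d = 2 * m + 1)
    {T : Set (Fin n → ZMod 2)} (hT : IsTrialSet C T)
    {c : Fin n → ZMod 2} (hcC : c ∈ C) (hwc : wt c = d ∨ wt c = d + 1) (hcT : c ∉ T)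
    (V : Finset (Fin n → ZMod 2))
    (hVM : ∀ v ∈ V, v ∈ M1 C) (hVs : ∀ v ∈ V, supp v ⊆ supp c)
    (hVw : ∀ v ∈ V, wt v = m + 1)
    (hVcard : V.card = Nat.choose d (m + 1)) :
    Nat.choose d (m + 1) + 1 ≤
      (Aw (C : Set (Fin n → ZMod 2)) d).ncard +
      (Aw (C : Set (Fin n → ZMod 2)) (d + 1)).ncard := by
  classical
  set A := Aw (C : Set (Fin n → ZMod 2)) d with hA
  set B := Aw (C : Set (Fin n → ZMod 2)) (d + 1) with hB
  set W : Set (Fin n → ZMod 2) := (A ∪ B) \ {c} with hW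
  set g : (Fin n → ZMod 2) → (Fin n → ZMod 2) := fun v =>
    if h : ∃ c', c' ∈ T ∧ IsLH c' v then h.choose else 0 with hg
  have hspec : ∀ v ∈ V, g v ∈ T ∧ IsLH (g v) v := by
    intro v hv
    have hmem := hT.2 (hVM v hv)
    simp only [LHset, Set.mem_iUnion] at hmem
    obtain ⟨c', hc', hlh⟩ := hmem
    have hex : ∃ c', c' ∈ T ∧ IsLH c' v := ⟨c', hc', hlh⟩
    simp only [hg, dif_pos hex]
    exact hex.choose_spec
  have hprops : ∀ v ∈ V, g v ∈ C ∧ g v ≠ 0 ∧ g v ≠ c ∧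
      (wt (g v) = d ∨ wt (g v) = d + 1) ∧ supp v ⊆ supp (g v) := by
    intro v hv
    obtain ⟨hgT, hlh⟩ := hspec v hv
    have hmem := hT.1 hgT
    rw [Set.mem_diff, Set.mem_singleton_iff] at hmem
    have hne : g v ≠ c := fun h => hcT (h ▸ hgT)
    have hge : d ≤ wt (g v) := hd.2 _ hmem.1 hmem.2
    have hle : wt (g v) ≤ 2 * wt v := LH_wt hlh
    have hwv := hVw v hv
    exact ⟨hmem.1, hmem.2, hne, by omega, LH_subset hlh⟩
  have hinter : ∀ v ∈ V, supp v = supp c ∩ supp (g v) := by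
    intro v hv
    obtain ⟨hgC, hg0, hgc, hgw, hgs⟩ := hprops v hv
    have hsub : supp v ⊆ supp c ∩ supp (g v) :=
      Finset.subset_inter (hVs v hv) hgs
    have hcard : (supp c ∩ supp (g v)).card ≤ m + 1 := by
      have heC : c + g v ∈ C := C.add_mem hcC hgC
      have he0 : c + g v ≠ 0 := by
        intro h0
        apply hgc
        have : c + (g v + g v) = 0 + g v := by rw [← add_assoc, h0]
        rw [add_self', add_zero, zero_add] at this
        exact this.symm
      have hed : d ≤ wt (c + g v) := hd.2 _ heC he0
      have hse := supp_add c (g v)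
      have hus : supp c ∩ supp (g v) ⊆ supp c ∪ supp (g v) :=
        Finset.inter_subset_union
      have hwe : wt (c + g v) =
          (supp c ∪ supp (g v)).card - (supp c ∩ supp (g v)).card := by
        rw [wt, hse, Finset.card_sdiff_of_subset hus]
      have hui := Finset.card_union_add_card_inter (supp c) (supp (g v))
      have hwc' : wt c ≤ d + 1 := by rcases hwc with h | h <;> omega
      have hwg : wt (g v) ≤ d + 1 := by rcases hgw with h | h <;> omega
      simp only [wt] at hwc' hwg
      omega
    rw [← hVw v hv, wt] at hcard
    exact Finset.eq_of_subset_of_card_le hsub hcard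
  have hmaps : ∀ v ∈ (V : Set (Fin n → ZMod 2)), g v ∈ W := by
    intro v hv
    rw [Finset.mem_coe] at hv
    obtain ⟨hgC, hg0, hgc, hgw, hgs⟩ := hprops v hv
    rw [hW, Set.mem_diff, Set.mem_singleton_iff, Set.mem_union]
    refine ⟨?_, hgc⟩
    rcases hgw with h | h
    · left; exact ⟨hgC, h⟩
    · right; exact ⟨hgC, h⟩
  have hinj : Set.InjOn g (V : Set (Fin n → ZMod 2)) := by
    intro v₁ hv₁ v₂ hv₂ heq
    rw [Finset.mem_coe] at hv₁ hv₂
    apply eq_of_supp_eq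
    rw [hinter v₁ hv₁, hinter v₂ hv₂, heq]
  have hle1 : (V : Set (Fin n → ZMod 2)).ncard ≤ W.ncard :=
    Set.ncard_le_ncard_of_injOn g hmaps hinj (Set.toFinite W)
  rw [Set.ncard_coe_finset, hVcard] at hle1
  have hcmem : c ∈ A ∪ B := by
    rw [Set.mem_union]
    rcases hwc with h | h
    · left; exact ⟨hcC, h⟩
    · right; exact ⟨hcC, h⟩
  have hW1 : W.ncard + 1 = (A ∪ B).ncard :=
    Set.ncard_diff_singleton_add_one hcmem (Set.toFinite _)
  have hW2 : (A ∪ B).ncard ≤ A.ncard + B.ncard :=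
    Set.ncard_union_le A B
  omega

end Main

/-- for odd d, if C(d,(d+1)/2) > |A_d(C)| + |A_{d+1}(C)| − 1, then
every codeword of weight d or d+1 lies in every trial set for C. -/
theorem stmt19 {n : ℕ} (C : Submodule (ZMod 2) (Fin n → ZMod 2)) (d : ℕ)
    (hd : HasMinDist C d) (hodd : Odd d)
    (hcond : ((Nat.choose d ((d + 1) / 2) : ℚ)) >
      ((Aw (C : Set (Fin n → ZMod 2)) d).ncard : ℚ) +
      ((Aw (C : Set (Fin n → ZMod 2)) (d + 1)).ncard : ℚ) - 1) :
    ∀ T : Set (Fin n → ZMod 2), IsTrialSet C T →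
      Aw (C : Set (Fin n → ZMod 2)) d ∪ Aw (C : Set (Fin n → ZMod 2)) (d + 1) ⊆ T := by
  intro T hT c hc
  by_contra hcT
  obtain ⟨m, hdm⟩ := hodd
  have hk : (d + 1) / 2 = m + 1 := by omega
  rw [hk] at hcond
  have hcc : c ∈ C ∧ (wt c = d ∨ wt c = d + 1) := by
    rcases hc with h | h
    · exact ⟨h.1, Or.inl h.2⟩
    · exact ⟨h.1, Or.inr h.2⟩
  obtain ⟨hcC, hwc⟩ := hcc
  have hnum : Nat.choose d (m + 1) + 1 ≤
      (Aw (C : Set (Fin n → ZMod 2)) d).ncard +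
      (Aw (C : Set (Fin n → ZMod 2)) (d + 1)).ncard := by
    rcases hwc with hwcd | hwcd
    · -- weight d case
      refine core hd hdm hT hcC (Or.inl hwcd) hcT
        (((supp c).powersetCard (m + 1)).image ind) ?_ ?_ ?_ ?_
      · intro v hv
        rw [Finset.mem_image] at hv
        obtain ⟨s, hs, rfl⟩ := hv
        rw [Finset.mem_powersetCard] at hs
        exact mem_M1_d hd hdm hcC hwcd (by rw [supp_ind]; exact hs.1)
          (by rw [wt, supp_ind]; exact hs.2)
      · intro v hv
        rw [Finset.mem_image] at hv
        obtain ⟨s, hs, rfl⟩ := hv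
        rw [Finset.mem_powersetCard] at hs
        rw [supp_ind]; exact hs.1
      · intro v hv
        rw [Finset.mem_image] at hv
        obtain ⟨s, hs, rfl⟩ := hv
        rw [Finset.mem_powersetCard] at hs
        rw [wt, supp_ind]; exact hs.2
      · rw [Finset.card_image_of_injective _ ind_injective,
          Finset.card_powersetCard]
        exact congrArg (fun k => Nat.choose k (m + 1)) hwcd
    · -- weight d+1 case
      have hne : (supp c).Nonempty := by
        rw [← Finset.card_pos]
        have : wt c = d + 1 := hwcd
        rw [wt] at this; omega
      set i₀ := (supp c).min' hne with hi₀
      have hi₀c : i₀ ∈ supp c := Finset.min'_mem _ _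
      have hmin : ∀ j ∈ supp c, i₀ ≤ j := fun j hj => Finset.min'_le _ _ hj
      have hprop : ∀ v ∈ (((supp c).erase i₀).powersetCard m).image
          (fun s => ind (insert i₀ s)),
          supp v ⊆ supp c ∧ wt v = m + 1 ∧ i₀ ∈ supp v := by
        intro v hv
        rw [Finset.mem_image] at hv
        obtain ⟨s, hs, rfl⟩ := hv
        rw [Finset.mem_powersetCard] at hs
        have hi₀s : i₀ ∉ s := fun h => Finset.notMem_erase i₀ (supp c) (hs.1 h)
        refine ⟨?_, ?_, ?_⟩
        · rw [supp_ind]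
          intro j hj
          rw [Finset.mem_insert] at hj
          rcases hj with rfl | hj
          · exact hi₀c
          · exact Finset.erase_subset _ _ (hs.1 hj)
        · rw [wt, supp_ind, Finset.card_insert_of_notMem hi₀s, hs.2]
        · rw [supp_ind]; exact Finset.mem_insert_self _ _
      refine core hd hdm hT hcC (Or.inr hwcd) hcT
        ((((supp c).erase i₀).powersetCard m).image (fun s => ind (insert i₀ s)))
        ?_ ?_ ?_ ?_
      · intro v hv
        obtain ⟨h1, h2, h3⟩ := hprop v hv
        exact mem_M1_d1 hd hdm hcC hwcd h1 h2 h3 hmin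
      · intro v hv; exact (hprop v hv).1
      · intro v hv; exact (hprop v hv).2.1
      · rw [Finset.card_image_of_injOn, Finset.card_powersetCard,
          Finset.card_erase_of_mem hi₀c]
        · have h1 : (supp c).card = d + 1 := hwcd
          rw [h1]
          simp only [Nat.add_sub_cancel]
          have h2 : m + 1 ≤ d := by omega
          have := Nat.choose_symm h2
          rw [show d - (m + 1) = m by omega] at this
          exact this
        · intro s₁ hs₁ s₂ hs₂ heq
          rw [Finset.mem_coe, Finset.mem_powersetCard] at hs₁ hs₂
          have hi₁ : i₀ ∉ s₁ := fun h => Finset.notMem_erase i₀ (supp c) (hs₁.1 h)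
          have hi₂ : i₀ ∉ s₂ := fun h => Finset.notMem_erase i₀ (supp c) (hs₂.1 h)
          have := ind_injective heq
          rw [← Finset.erase_insert hi₁, ← Finset.erase_insert hi₂, this]
  have hq : ((Nat.choose d (m + 1) : ℚ)) + 1 ≤
      ((Aw (C : Set (Fin n → ZMod 2)) d).ncard : ℚ) +
      ((Aw (C : Set (Fin n → ZMod 2)) (d + 1)).ncard : ℚ) := by
    exact_mod_cast hnum
  linarith
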